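/- arXiv:2008.05345 — 3 statements merged into one kernel-verified Lean document; each statement's English description precedes it below -/
import Mathlib

section
/- Let G be a graph, u a universal vertex of G, and k a positive integer with k ≤ δ(G)+1, where δ(G) is the minimum degree. Then γ_{×k}(G) = γ_{×(k−1)}(G − u) + 1, where G − u is the subgraph induced on V(G)∖{u}. -/
open Set

def closedNbhd {V : Type*} (G : SimpleGraph V) (v : V) : Set V :=
  insert v (G.neighborSet v)

def IsKTupleDomSet {V : Type*} (G : SimpleGraph V) (k : ℕ) (D : Set V) : Prop :=
  ∀ v : V, k ≤ (closedNbhd G v ∩ D).ncard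

noncomputable def ktupleDomNum {V : Type*} (G : SimpleGraph V) (k : ℕ) : ℕ :=
  sInf {d | ∃ D : Set V, IsKTupleDomSet G k D ∧ D.ncard = d}

def IsUniversal {V : Type*} (G : SimpleGraph V) (u : V) : Prop :=
  ∀ w : V, w ≠ u → G.Adj u w

/-!
Call `G - u` the graph `H`. Adding the universal vertex `u` to a `(k-1)`-tuple dominating set
of `H` gives a `k`-tuple dominating set of `G`, since `u` lies in every closed neighbourhood.
Conversely, a minimum `k`-tuple dominating set of `G` may be assumed to contain `u` (otherwise
trade any of its vertices for `u`), and removing `u` from it leaves a `(k-1)`-tuple dominating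
set of `H`. The bound `k ≤ δ(G) + 1` makes `V(G)` itself `k`-tuple dominating, so both minima
are attained (`ktupleDomNum` would otherwise be the junk value `sInf ∅ = 0`).
-/

section ClosedNbhd

variable {V : Type*} (G : SimpleGraph V)

lemma mem_closedNbhd_self (v : V) : v ∈ closedNbhd G v := mem_insert v _

lemma ncard_closedNbhd [Finite V] (v : V) :
    (closedNbhd G v).ncard = (G.neighborSet v).ncard + 1 :=
  ncard_insert_of_notMem (G.notMem_neighborSet_self (a := v))

lemma image_val_closedNbhd_induce_inter (s : Set V) (v : s) (D : Set s) :
    Subtype.val '' (closedNbhd (G.induce s) v ∩ D) = closedNbhd G v ∩ Subtype.val '' D := by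
  ext w
  simp only [closedNbhd, mem_image, mem_inter_iff, mem_insert_iff,
    SimpleGraph.mem_neighborSet, SimpleGraph.comap_adj, Function.Embedding.subtype_apply]
  constructor
  · rintro ⟨w, ⟨hwv, hwD⟩, rfl⟩
    exact ⟨hwv.imp (congrArg Subtype.val) id, w, hwD, rfl⟩
  · rintro ⟨hwv, w, hwD, rfl⟩
    exact ⟨w, ⟨hwv.imp Subtype.ext id, hwD⟩, rfl⟩

lemma ncard_closedNbhd_induce_inter (s : Set V) (v : s) (D : Set s) :
    (closedNbhd (G.induce s) v ∩ D).ncard = (closedNbhd G v ∩ Subtype.val '' D).ncard := by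
  rw [← image_val_closedNbhd_induce_inter, ncard_image_of_injective _ Subtype.val_injective]

variable {G}

lemma IsUniversal.mem_closedNbhd {u : V} (hu : IsUniversal G u) (v : V) :
    u ∈ closedNbhd G v := by
  by_cases hvu : v = u
  · exact hvu ▸ mem_closedNbhd_self G v
  · exact mem_insert_of_mem _ (hu v hvu).symm

lemma IsUniversal.closedNbhd_self_eq_univ {u : V} (hu : IsUniversal G u) :
    closedNbhd G u = univ :=
  eq_univ_of_forall fun w => by
    by_cases hwu : w = u
    · exact hwu ▸ mem_closedNbhd_self G u
    · exact mem_insert_of_mem _ (hu w hwu)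

end ClosedNbhd

section DeleteVertex

variable {V : Type*} [Finite V] {u : V}

lemma ncard_insert_image_val (D : Set {v : V | v ≠ u}) :
    (insert u (Subtype.val '' D)).ncard = D.ncard + 1 := by
  rw [ncard_insert_of_notMem (by rintro ⟨w, -, hw⟩; exact w.2 hw),
    ncard_image_of_injective _ Subtype.val_injective]

lemma ncard_preimage_val_add_one {S : Set V} (hu : u ∈ S) :
    (Subtype.val ⁻¹' S : Set {v : V | v ≠ u}).ncard + 1 = S.ncard := by
  rw [← ncard_image_of_injective _ Subtype.val_injective, Subtype.image_preimage_coe,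
    ← ncard_sdiff_singleton_add_one hu]
  congr 2
  ext w
  simp only [mem_inter_iff, mem_ofPred_eq, mem_sdiff, mem_singleton_iff]
  tauto

end DeleteVertex

section KTupleDomination

variable {V : Type*} {G : SimpleGraph V} {k : ℕ}

lemma ktupleDomNum_le_ncard {D : Set V} (hD : IsKTupleDomSet G k D) :
    ktupleDomNum G k ≤ D.ncard :=
  Nat.sInf_le ⟨D, hD, rfl⟩

lemma exists_ncard_eq_ktupleDomNum (h : ∃ D, IsKTupleDomSet G k D) :
    ∃ D, IsKTupleDomSet G k D ∧ D.ncard = ktupleDomNum G k := by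
  obtain ⟨D, hD⟩ := h
  exact Nat.sInf_mem (s := {d | ∃ D, IsKTupleDomSet G k D ∧ D.ncard = d}) ⟨_, D, hD, rfl⟩

lemma isKTupleDomSet_univ [Finite V] (hk : ∀ v, k ≤ (G.neighborSet v).ncard + 1) :
    IsKTupleDomSet G k univ := fun v => by
  rw [inter_univ, ncard_closedNbhd]
  exact hk v

lemma IsKTupleDomSet.preimage_val [Finite V] {D : Set V} (hD : IsKTupleDomSet G k D) (u : V) :
    IsKTupleDomSet (G.induce {v | v ≠ u}) (k - 1) (Subtype.val ⁻¹' D) := fun v => by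
  have hrestr : closedNbhd G v ∩ Subtype.val '' (Subtype.val ⁻¹' D : Set {v : V | v ≠ u})
      = (closedNbhd G v ∩ D) \ {u} := by
    rw [Subtype.image_preimage_coe]
    ext w
    simp only [mem_inter_iff, mem_sdiff, mem_ofPred_eq, mem_singleton_iff]
    tauto
  rw [ncard_closedNbhd_induce_inter, hrestr]
  exact (Nat.sub_le_sub_right (hD v) 1).trans (pred_ncard_le_ncard_sdiff_singleton _ _)

lemma IsKTupleDomSet.insert_image_val [Finite V] {u : V} (hu : IsUniversal G u)
    (hku : k ≤ (G.neighborSet u).ncard + 1) {D : Set {v : V | v ≠ u}}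
    (hD : IsKTupleDomSet (G.induce {v | v ≠ u}) (k - 1) D) :
    IsKTupleDomSet G k (insert u (Subtype.val '' D)) := by
  intro v
  by_cases hvu : v = u
  · subst hvu
    rw [hu.closedNbhd_self_eq_univ, univ_inter, ncard_insert_image_val]
    rcases isEmpty_or_nonempty {w : V | w ≠ v} with hempty | ⟨⟨x⟩⟩
    · have : G.neighborSet v = ∅ :=
        eq_empty_of_forall_notMem fun w hw => hempty.elim ⟨w, (G.ne_of_adj hw).symm⟩
      rw [this, ncard_empty] at hku
      omega
    · have := (hD x).trans (ncard_le_ncard inter_subset_right)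
      omega
  · rw [inter_insert_of_mem (hu.mem_closedNbhd v),
      ncard_insert_of_notMem (by rintro ⟨-, w, -, hw⟩; exact w.2 hw),
      ← ncard_closedNbhd_induce_inter G _ ⟨v, hvu⟩]
    have := hD ⟨v, hvu⟩
    omega

lemma IsKTupleDomSet.exists_mem_universal [Finite V] {u : V} (hu : IsUniversal G u) (hk : 0 < k)
    {D : Set V} (hD : IsKTupleDomSet G k D) :
    ∃ D', IsKTupleDomSet G k D' ∧ D'.ncard = D.ncard ∧ u ∈ D' := by
  by_cases huD : u ∈ D
  · exact ⟨D, hD, rfl, huD⟩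
  obtain ⟨d, -, hd⟩ : (closedNbhd G u ∩ D).Nonempty := (ncard_pos).mp (hk.trans_le (hD u))
  have hu_notMem : u ∉ D \ {d} := fun h => huD h.1
  refine ⟨insert u (D \ {d}), fun v => ?_, ?_, mem_insert u _⟩
  · -- trading `d` for `u` cannot lose anything, since `u` dominates every vertex
    have hswap : closedNbhd G v ∩ insert u (D \ {d}) = insert u ((closedNbhd G v ∩ D) \ {d}) := by
      rw [inter_insert_of_mem (hu.mem_closedNbhd v), inter_sdiff_assoc]
    rw [hswap, ncard_insert_of_notMem fun h => hu_notMem ⟨h.1.2, h.2⟩]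
    have := pred_ncard_le_ncard_sdiff_singleton (closedNbhd G v ∩ D) d
    have := hD v
    omega
  · rw [ncard_insert_of_notMem hu_notMem, ncard_sdiff_singleton_add_one hd]

end KTupleDomination

theorem stmt_3 {V : Type*} [Fintype V] (G : SimpleGraph V) (u : V) (hu : IsUniversal G u)
    (k : ℕ) (hk : 0 < k) (hdeg : ∀ v : V, k ≤ (G.neighborSet v).ncard + 1) :
    ktupleDomNum G k = ktupleDomNum (G.induce {v : V | v ≠ u}) (k - 1) + 1 := by
  obtain ⟨D, hD, hDcard⟩ := exists_ncard_eq_ktupleDomNum ⟨univ, isKTupleDomSet_univ hdeg⟩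
  obtain ⟨D₂, hD₂, hD₂card, huD₂⟩ := hD.exists_mem_universal hu hk
  obtain ⟨D', hD', hD'card⟩ := exists_ncard_eq_ktupleDomNum ⟨_, hD₂.preimage_val u⟩
  apply le_antisymm
  · calc ktupleDomNum G k ≤ (insert u (Subtype.val '' D')).ncard :=
          ktupleDomNum_le_ncard (hD'.insert_image_val hu (hdeg u))
      _ = ktupleDomNum (G.induce {v : V | v ≠ u}) (k - 1) + 1 := by
          rw [ncard_insert_image_val, hD'card]
  · calc ktupleDomNum (G.induce {v : V | v ≠ u}) (k - 1) + 1
        ≤ (Subtype.val ⁻¹' D₂ : Set {v : V | v ≠ u}).ncard + 1 :=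
          Nat.add_le_add_right (ktupleDomNum_le_ncard (hD₂.preimage_val u)) 1
      _ = ktupleDomNum G k := by rw [ncard_preimage_val_add_one huD₂, hD₂card, hDcard]
end

section
/- Let G be a co-biconvex graph without universal vertices with clique partition (C₁, C₂), auxiliary interval graphs H₁, H₂ with independence numbers α₁, α₂. If α₁ + α₂ = k and |Cᵢ| ≥ αᵢ + 1 for i = 1,2, then γ_{×k}(G) = k + 2. -/
open Set

def auxGraph {V : Type*} (G : SimpleGraph V) (C₁ C₂ : Set V) : SimpleGraph V where
  Adj a b := a ≠ b ∧ a ∈ C₁ ∧ b ∈ C₁ ∧ ∃ v ∈ C₂, ¬ G.Adj v a ∧ ¬ G.Adj v b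
  symm := ⟨by rintro a b ⟨h, ha, hb, v, hv, h1, h2⟩; exact ⟨h.symm, hb, ha, v, hv, h2, h1⟩⟩
  loopless := ⟨fun a h => h.1 rfl⟩

def IsStableIn {V : Type*} (H : SimpleGraph V) (S : Set V) : Prop :=
  S.Pairwise fun a b => ¬ H.Adj a b

noncomputable def indepNumOn {V : Type*} (H : SimpleGraph V) (C : Set V) : ℕ :=
  sSup {d | ∃ S ⊆ C, IsStableIn H S ∧ S.ncard = d}

/-! If `D` is a `k`-tuple dominating set with `|D| ≤ k + 1`, no vertex of `C₂` can miss two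
vertices of `D ∩ C₁` (it would see at most `k - 1` vertices of `D`), so `D ∩ Cᵢ` is stable in
`Hᵢ` and `|D| ≤ α₁ + α₂ = k`. But then every vertex sees all of `D`, and any vertex of `D` is
universal.

Conversely, take a maximum stable set `Sᵢ` of `Hᵢ` and one more vertex `xᵢ ∈ Cᵢ \ Sᵢ`. A vertex
of `C₂` sees all of `C₂` and, `S₁` being stable in `H₁`, misses at most one vertex of `S₁`; so it
misses at most two of the `k + 2` chosen vertices, and symmetrically for `C₁`. -/

section ClosedNbhd

variable {V : Type*} {G : SimpleGraph V}

lemma mem_closedNbhd {v w : V} : w ∈ closedNbhd G v ↔ w = v ∨ G.Adj v w := Iff.rfl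

lemma SimpleGraph.IsClique.subset_closedNbhd {C : Set V} (hC : G.IsClique C) {v : V}
    (hv : v ∈ C) : C ⊆ closedNbhd G v := by
  intro w hw
  by_cases h : w = v
  exacts [.inl h, .inr (hC hv hw (Ne.symm h))]

lemma isKTupleDomSet_iff [Finite V] {k : ℕ} {D : Set V} :
    IsKTupleDomSet G k D ↔ ∀ v, k + (D \ closedNbhd G v).ncard ≤ D.ncard := by
  refine forall_congr' fun v => ?_
  rw [← ncard_inter_add_ncard_sdiff_eq_ncard D (closedNbhd G v), inter_comm]
  omega

lemma IsKTupleDomSet.isUniversal_of_ncard_le [Finite V] {k : ℕ} {D : Set V}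
    (hD : IsKTupleDomSet G k D) (hcard : D.ncard ≤ k) {u : V} (hu : u ∈ D) :
    IsUniversal G u := by
  intro w hw
  have hsees : D ⊆ closedNbhd G w := by
    have := isKTupleDomSet_iff.1 hD w
    rw [← sdiff_eq_empty, ← ncard_eq_zero]
    omega
  exact ((mem_closedNbhd.1 (hsees hu)).resolve_left hw.symm).symm

end ClosedNbhd

section Stable

variable {V : Type*} [Finite V]

lemma bddAbove_ncard_isStableIn (H : SimpleGraph V) (C : Set V) :
    BddAbove {d | ∃ S ⊆ C, IsStableIn H S ∧ S.ncard = d} :=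
  ⟨Nat.card V, by rintro _ ⟨S, -, -, rfl⟩; exact ncard_le_card S⟩

lemma IsStableIn.ncard_le_indepNumOn {H : SimpleGraph V} {C S : Set V}
    (hS : IsStableIn H S) (hSC : S ⊆ C) : S.ncard ≤ indepNumOn H C :=
  le_csSup (bddAbove_ncard_isStableIn H C) ⟨S, hSC, hS, rfl⟩

lemma exists_isStableIn_ncard_eq_indepNumOn (H : SimpleGraph V) (C : Set V) :
    ∃ S ⊆ C, IsStableIn H S ∧ S.ncard = indepNumOn H C :=
  Nat.sSup_mem (s := {d | ∃ S ⊆ C, IsStableIn H S ∧ S.ncard = d})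
    ⟨0, ∅, empty_subset C, pairwise_empty _, ncard_empty V⟩ (bddAbove_ncard_isStableIn H C)

variable {G : SimpleGraph V} {C₁ C₂ : Set V}

lemma IsKTupleDomSet.isStableIn_auxGraph (hdisj : Disjoint C₁ C₂) {k : ℕ}
    {D : Set V} (hD : IsKTupleDomSet G k D) (hcard : D.ncard ≤ k + 1) :
    IsStableIn (auxGraph G C₁ C₂) (D ∩ C₁) := by
  rintro a ⟨haD, -⟩ b ⟨hbD, -⟩ hab ⟨-, ha, hb, v, hv, hva, hvb⟩
  have hmissed : {a, b} ⊆ D \ closedNbhd G v := by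
    rintro w (rfl | rfl)
    · exact ⟨haD, fun h => (mem_closedNbhd.1 h).elim (hdisj.ne_of_mem ha hv) hva⟩
    · exact ⟨hbD, fun h => (mem_closedNbhd.1 h).elim (hdisj.ne_of_mem hb hv) hvb⟩
  have h₁ := isKTupleDomSet_iff.1 hD v
  have h₂ := ncard_le_ncard hmissed
  rw [ncard_pair hab] at h₂
  omega

lemma IsStableIn.ncard_sdiff_closedNbhd_le_one {S : Set V}
    (hS : IsStableIn (auxGraph G C₁ C₂) S) (hSC : S ⊆ C₁) {v : V} (hv : v ∈ C₂) :
    (S \ closedNbhd G v).ncard ≤ 1 := by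
  rw [ncard_le_one_iff]
  rintro a b ⟨haS, haN⟩ ⟨hbS, hbN⟩
  by_contra hab
  exact hS haS hbS hab ⟨hab, hSC haS, hSC hbS, v, hv, fun h => haN (mem_closedNbhd.2 (.inr h)),
    fun h => hbN (mem_closedNbhd.2 (.inr h))⟩

lemma ncard_sdiff_closedNbhd_le_two (hc₂ : G.IsClique C₂) {S T : Set V}
    (hS : IsStableIn (auxGraph G C₁ C₂) S) (hSC : S ⊆ C₁) (hTC : T ⊆ C₂) (x : V) {v : V}
    (hv : v ∈ C₂) : ((insert x S ∪ T) \ closedNbhd G v).ncard ≤ 2 := by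
  have hsub : (insert x S ∪ T) \ closedNbhd G v ⊆ insert x (S \ closedNbhd G v) := by
    rintro w ⟨(rfl | hwS) | hwT, hwN⟩
    · exact mem_insert w _
    · exact mem_insert_of_mem x ⟨hwS, hwN⟩
    · exact absurd (hc₂.subset_closedNbhd hv (hTC hwT)) hwN
  calc _ ≤ (insert x (S \ closedNbhd G v)).ncard := ncard_le_ncard hsub
    _ ≤ (S \ closedNbhd G v).ncard + 1 := ncard_insert_le x _
    _ ≤ 2 := by have := hS.ncard_sdiff_closedNbhd_le_one hSC hv; omega

end Stable

section CoBiconvex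

variable {V : Type*} [Finite V] {G : SimpleGraph V} {C₁ C₂ : Set V}

lemma IsKTupleDomSet.add_two_le_ncard [Nonempty V] (hC : IsCompl C₁ C₂)
    (hnouniv : ∀ v : V, ¬ IsUniversal G v) {k : ℕ} (hk : 0 < k)
    (hα : indepNumOn (auxGraph G C₁ C₂) C₁ + indepNumOn (auxGraph G C₂ C₁) C₂ ≤ k)
    {D : Set V} (hD : IsKTupleDomSet G k D) : k + 2 ≤ D.ncard := by
  by_contra! hcard
  have h₁ := (hD.isStableIn_auxGraph hC.disjoint (by omega)).ncard_le_indepNumOn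
    inter_subset_right
  have h₂ := (hD.isStableIn_auxGraph hC.symm.disjoint (by omega)).ncard_le_indepNumOn
    inter_subset_right
  have hsplit := ncard_inter_add_ncard_sdiff_eq_ncard D C₁
  rw [sdiff_eq, hC.compl_eq] at hsplit
  obtain ⟨v⟩ := ‹Nonempty V›
  obtain ⟨u, hu⟩ : D.Nonempty :=
    nonempty_of_ncard_ne_zero (by have := (hD v).trans (ncard_inter_le_ncard_right _ D); omega)
  exact hnouniv u (hD.isUniversal_of_ncard_le (by omega) hu)

lemma exists_isKTupleDomSet_ncard_eq (hC : IsCompl C₁ C₂)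
    (hc₁ : G.IsClique C₁) (hc₂ : G.IsClique C₂) {k : ℕ}
    (hα : indepNumOn (auxGraph G C₁ C₂) C₁ + indepNumOn (auxGraph G C₂ C₁) C₂ = k)
    (hC₁ : indepNumOn (auxGraph G C₁ C₂) C₁ + 1 ≤ C₁.ncard)
    (hC₂ : indepNumOn (auxGraph G C₂ C₁) C₂ + 1 ≤ C₂.ncard) :
    ∃ D, IsKTupleDomSet G k D ∧ D.ncard = k + 2 := by
  obtain ⟨S₁, hS₁C, hS₁, hS₁card⟩ :=
    exists_isStableIn_ncard_eq_indepNumOn (auxGraph G C₁ C₂) C₁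
  obtain ⟨S₂, hS₂C, hS₂, hS₂card⟩ :=
    exists_isStableIn_ncard_eq_indepNumOn (auxGraph G C₂ C₁) C₂
  obtain ⟨x₁, hx₁, hx₁S⟩ := exists_mem_notMem_of_ncard_lt_ncard (s := S₁) (t := C₁) (by omega)
  obtain ⟨x₂, hx₂, hx₂S⟩ := exists_mem_notMem_of_ncard_lt_ncard (s := S₂) (t := C₂) (by omega)
  have hT₁C : insert x₁ S₁ ⊆ C₁ := insert_subset hx₁ hS₁C
  have hT₂C : insert x₂ S₂ ⊆ C₂ := insert_subset hx₂ hS₂C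
  have hcard : (insert x₁ S₁ ∪ insert x₂ S₂).ncard = k + 2 := by
    rw [ncard_union_eq (hC.disjoint.mono hT₁C hT₂C), ncard_insert_of_notMem hx₁S,
      ncard_insert_of_notMem hx₂S]
    omega
  refine ⟨insert x₁ S₁ ∪ insert x₂ S₂, isKTupleDomSet_iff.2 fun v => ?_, hcard⟩
  have hmissed : ((insert x₁ S₁ ∪ insert x₂ S₂) \ closedNbhd G v).ncard ≤ 2 := by
    by_cases hv : v ∈ C₁
    · rw [union_comm]
      exact ncard_sdiff_closedNbhd_le_two hc₁ hS₂ hS₂C hT₁C x₂ hv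
    · exact ncard_sdiff_closedNbhd_le_two hc₂ hS₁ hS₁C hT₂C x₁ (hC.compl_eq ▸ hv)
  omega

end CoBiconvex

theorem stmt_10_general {V : Type*} [Fintype V] (G : SimpleGraph V) (C₁ C₂ : Set V)
    (hpart : C₁ ∪ C₂ = Set.univ) (hdisj : Disjoint C₁ C₂)
    (hc1 : G.IsClique C₁) (hc2 : G.IsClique C₂)
    (hnouniv : ∀ v : V, ¬ IsUniversal G v)
    (k : ℕ)
    (hsum : indepNumOn (auxGraph G C₁ C₂) C₁ + indepNumOn (auxGraph G C₂ C₁) C₂ = k)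
    (hC1 : indepNumOn (auxGraph G C₁ C₂) C₁ + 1 ≤ C₁.ncard)
    (hC2 : indepNumOn (auxGraph G C₂ C₁) C₂ + 1 ≤ C₂.ncard) :
    ktupleDomNum G k = k + 2 := by
  have hC : IsCompl C₁ C₂ := ⟨hdisj, codisjoint_iff.2 hpart⟩
  obtain ⟨c, hc⟩ : C₁.Nonempty := (ncard_pos).1 (by omega)
  have : Nonempty V := ⟨c⟩
  have hα₁ : ({c} : Set V).ncard ≤ indepNumOn (auxGraph G C₁ C₂) C₁ :=
    IsStableIn.ncard_le_indepNumOn (pairwise_singleton c _) (singleton_subset_iff.2 hc)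
  have hk : 0 < k := by rw [ncard_singleton] at hα₁; omega
  obtain ⟨D, hD, hDcard⟩ := exists_isKTupleDomSet_ncard_eq hC hc1 hc2 hsum hC1 hC2
  exact IsLeast.csInf_eq ⟨⟨D, hD, hDcard⟩, by
    rintro _ ⟨D', hD', rfl⟩
    exact hD'.add_two_le_ncard hC hnouniv hk hsum.le⟩

theorem stmt_10 {V : Type*} [Fintype V] (G : SimpleGraph V) (C₁ C₂ : Set V)
    (hpart : C₁ ∪ C₂ = Set.univ) (hdisj : Disjoint C₁ C₂)
    (hne1 : C₁.Nonempty) (hne2 : C₂.Nonempty)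
    (hc1 : G.IsClique C₁) (hc2 : G.IsClique C₂)
    (hnouniv : ∀ v : V, ¬ IsUniversal G v)
    (k : ℕ)
    (hsum : indepNumOn (auxGraph G C₁ C₂) C₁ + indepNumOn (auxGraph G C₂ C₁) C₂ = k)
    (hC1 : indepNumOn (auxGraph G C₁ C₂) C₁ + 1 ≤ C₁.ncard)
    (hC2 : indepNumOn (auxGraph G C₂ C₁) C₂ + 1 ≤ C₂.ncard) :
    ktupleDomNum G k = k + 2 :=
  stmt_10_general G C₁ C₂ hpart hdisj hc1 hc2 hnouniv k hsum hC1 hC2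
end

section
/- For every web graph W_n^m with n ≥ 2m+1 and every positive integer k with k ≤ 2m+1, the k-tuple domination number is γ_{×k}(W_n^m) = ⌈kn/(2m+1)⌉. -/
open Set


def webGraph (n m : ℕ) : SimpleGraph (ZMod n) where
  Adj i j := i ≠ j ∧ ∃ l : ℕ, 1 ≤ l ∧ l ≤ m ∧ (j = i + (l : ZMod n) ∨ j = i - (l : ZMod n))
  symm := ⟨by
    rintro i j ⟨hne, l, h1, h2, h3 | h3⟩
    · exact ⟨hne.symm, l, h1, h2, Or.inr (by rw [h3]; ring)⟩
    · exact ⟨hne.symm, l, h1, h2, Or.inl (by rw [h3]; ring)⟩⟩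
  loopless := ⟨fun i h => h.1 rfl⟩

/-
Double counting the pairs (v, d) with d ∈ D ∩ N[v] gives k n ≤ (2m+1)|D| for every k-tuple
dominating set D. Conversely, with r = ⌈kn/(2m+1)⌉ ≤ n, take D to be the r residues i at which
⌊i r / n⌋ increases. The number of such points in a window [a, b) of at most n consecutive
residues telescopes to ⌊b r / n⌋ - ⌊a r / n⌋, which for a closed neighbourhood (b - a = 2m+1) is
at least k because (2m+1) r ≥ k n.
-/

lemma mem_closedNbhd_comm {V : Type*} (G : SimpleGraph V) {v w : V} :
    w ∈ closedNbhd G v ↔ v ∈ closedNbhd G w := by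
  simp only [closedNbhd, mem_insert_iff, SimpleGraph.mem_neighborSet, G.adj_comm, eq_comm]

lemma sum_ncard_closedNbhd_inter {V : Type*} [Fintype V] {G : SimpleGraph V} {s : ℕ}
    (hG : ∀ v, (closedNbhd G v).ncard = s) (D : Set V) :
    ∑ v, (closedNbhd G v ∩ D).ncard = s * D.ncard := by
  classical
  calc ∑ v, (closedNbhd G v ∩ D).ncard
      = ∑ v, ∑ d ∈ (closedNbhd G v).toFinset ∩ D.toFinset, 1 := by
        simp [Set.ncard_eq_toFinset_card', Set.toFinset_inter]
    _ = ∑ d ∈ D.toFinset, ∑ v ∈ (closedNbhd G d).toFinset, 1 :=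
        Finset.sum_comm' fun v d => by simp [mem_closedNbhd_comm G (v := v), and_comm]
    _ = s * D.ncard := by
        simp only [Finset.sum_const, smul_eq_mul, mul_one, ← Set.ncard_eq_toFinset_card', hG,
          mul_comm]

lemma IsKTupleDomSet.mul_card_le {V : Type*} [Fintype V] {G : SimpleGraph V} {k s : ℕ}
    {D : Set V} (hD : IsKTupleDomSet G k D) (hG : ∀ v, (closedNbhd G v).ncard = s) :
    k * Fintype.card V ≤ s * D.ncard :=
  calc k * Fintype.card V = ∑ _v : V, k := by simp [mul_comm]
    _ ≤ ∑ v, (closedNbhd G v ∩ D).ncard := Finset.sum_le_sum fun v _ => hD v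
    _ = s * D.ncard := sum_ncard_closedNbhd_inter hG D

lemma ZMod.intCast_injOn_Ico {n : ℕ} {a b : ℤ} (h : b - a ≤ n) :
    InjOn (Int.cast : ℤ → ZMod n) (Ico a b) := by
  intro x hx y hy hxy
  rw [ZMod.intCast_eq_intCast_iff_dvd_sub] at hxy
  have := Int.eq_zero_of_abs_lt_dvd hxy <| by
    rw [abs_lt]
    constructor <;> linarith [hx.1, hx.2, hy.1, hy.2]
  omega

lemma card_filter_Ico_lt_add_one_eq_sub {F : ℤ → ℤ} (hF : ∀ i, F i ≤ F (i + 1) ∧ F (i + 1) ≤ F i + 1)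
    {a b : ℤ} (hab : a ≤ b) :
    ((Finset.Ico a b).filter (fun i => F i < F (i + 1))).card = F b - F a := by
  induction b, hab using Int.leInduction with
  | base => simp
  | succ b hab ih =>
    rw [← Finset.insert_Ico_right_eq_Ico_add_one hab, Finset.filter_insert]
    have := hF b
    split_ifs with h
    · rw [Finset.card_insert_of_notMem (by simp)]
      push_cast
      omega
    · omega

lemma webGraph_closedNbhd_intCast (n m : ℕ) (a : ℤ) :
    closedNbhd (webGraph n m) (a : ZMod n) = Int.cast '' Icc (a - m) (a + m) := by
  ext w
  simp only [closedNbhd, mem_insert_iff, SimpleGraph.mem_neighborSet, webGraph, mem_image,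
    mem_Icc]
  constructor
  · rintro (rfl | ⟨-, l, -, hlm, rfl | rfl⟩)
    · exact ⟨a, ⟨by omega, by omega⟩, rfl⟩
    · exact ⟨a + l, ⟨by omega, by omega⟩, by push_cast; ring⟩
    · exact ⟨a - l, ⟨by omega, by omega⟩, by push_cast; ring⟩
  · rintro ⟨i, hi, rfl⟩
    by_cases hia : (i : ZMod n) = a
    · exact Or.inl hia
    obtain ⟨l, hl⟩ : ∃ l : ℕ, i = a + l ∨ i = a - l := ⟨(i - a).natAbs, by omega⟩
    have hl1 : 1 ≤ l := by
      by_contra! h0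
      obtain rfl | rfl := hl <;> simp [Nat.lt_one_iff.mp h0] at hia
    refine Or.inr ⟨Ne.symm hia, l, hl1, by omega, ?_⟩
    obtain rfl | rfl := hl <;> push_cast <;> simp

lemma webGraph_ncard_closedNbhd {n m : ℕ} (hn : 2 * m + 1 ≤ n) (v : ZMod n) :
    (closedNbhd (webGraph n m) v).ncard = 2 * m + 1 := by
  obtain ⟨a, rfl⟩ := ZMod.intCast_surjective v
  rw [webGraph_closedNbhd_intCast, ← Set.Ico_add_one_right_eq_Icc,
    (ZMod.intCast_injOn_Ico (by omega)).ncard_image, ← Finset.coe_Ico, ncard_coe_finset,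
    Int.card_Ico]
  omega

def spreadSet (n r : ℕ) : Set (ZMod n) :=
  Int.cast '' {i : ℤ | i * r / n < (i + 1) * r / n}

lemma intCast_mem_spreadSet_iff {n r : ℕ} [NeZero n] (i : ℤ) :
    (i : ZMod n) ∈ spreadSet n r ↔ i * r / n < (i + 1) * r / n := by
  refine ⟨?_, fun h => ⟨i, h, rfl⟩⟩
  rintro ⟨j, hj, hji⟩
  obtain ⟨q, hq⟩ := (ZMod.intCast_eq_intCast_iff_dvd_sub j i n).mp hji
  have hn : (n : ℤ) ≠ 0 := by exact_mod_cast NeZero.ne n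
  have hshift : ∀ t : ℤ, (t + q * n) * r / n = t * r / n + q * r := fun t => by
    rw [show (t + q * n) * r = t * r + q * r * n by ring, Int.add_mul_ediv_right _ _ hn]
  rw [show i = j + q * n by linarith, hshift, add_right_comm, hshift]
  simpa using hj

lemma ncard_spreadSet_inter_Ico {n r : ℕ} [NeZero n] (hr : r ≤ n) {a b : ℤ} (hab : a ≤ b)
    (hba : b - a ≤ n) :
    ((spreadSet n r ∩ Int.cast '' Ico a b).ncard : ℤ) = b * r / n - a * r / n := by
  have hn : (0 : ℤ) < n := by exact_mod_cast Nat.pos_of_neZero n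
  have hpre : (Int.cast ⁻¹' spreadSet n r : Set ℤ) = {i : ℤ | i * r / n < (i + 1) * r / n} := by
    ext i
    exact intCast_mem_spreadSet_iff i
  rw [inter_comm, ← image_inter_preimage, hpre,
    ((ZMod.intCast_injOn_Ico hba).mono inter_subset_left).ncard_image]
  rw [← card_filter_Ico_lt_add_one_eq_sub (F := fun i => i * r / n) ?_ hab]
  · rw [← ncard_coe_finset, Finset.coe_filter]
    simp only [Finset.mem_Ico]
    rfl
  · intro i
    constructor
    · exact Int.ediv_le_ediv hn (by nlinarith)
    · calc (i + 1) * r / n ≤ (i * r + 1 * n) / n := Int.ediv_le_ediv hn (by nlinarith)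
        _ = i * r / n + 1 := Int.add_mul_ediv_right _ _ hn.ne'

lemma ncard_spreadSet {n r : ℕ} [NeZero n] (hr : r ≤ n) : (spreadSet n r).ncard = r := by
  have hcover : Int.cast '' Ico (0 : ℤ) n = (univ : Set (ZMod n)) :=
    eq_univ_of_forall fun x =>
      ⟨x.val, ⟨by positivity, by exact_mod_cast ZMod.val_lt x⟩, by simp⟩
  have := ncard_spreadSet_inter_Ico hr (a := 0) (b := n) (by omega) (by omega)
  rw [hcover, inter_univ] at this
  have hn : (n : ℤ) ≠ 0 := by exact_mod_cast NeZero.ne n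
  rw [Int.mul_ediv_cancel_left _ hn] at this
  simpa using this

lemma isKTupleDomSet_webGraph_spreadSet {n m k r : ℕ} (hn : 2 * m + 1 ≤ n) (hr : r ≤ n)
    (hkr : k * n ≤ (2 * m + 1) * r) : IsKTupleDomSet (webGraph n m) k (spreadSet n r) := by
  have : NeZero n := ⟨by omega⟩
  intro v
  obtain ⟨a, rfl⟩ := ZMod.intCast_surjective v
  rw [webGraph_closedNbhd_intCast, ← Set.Ico_add_one_right_eq_Icc, inter_comm]
  have hcount := ncard_spreadSet_inter_Ico hr (a := a - m) (b := a + m + 1) (by omega) (by omega)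
  have hwindow : (a - m) * r / n + k ≤ (a + m + 1) * r / n := by
    rw [← Int.add_mul_ediv_right _ _ (by omega : (n : ℤ) ≠ 0)]
    exact Int.ediv_le_ediv (by omega) (by nlinarith)
  omega

theorem stmt_18_general (n m k : ℕ) (hn : 2 * m + 1 ≤ n) (hk2 : k ≤ 2 * m + 1) :
    ktupleDomNum (webGraph n m) k = (k * n + 2 * m) / (2 * m + 1) := by
  have : NeZero n := ⟨by omega⟩
  set r := (k * n + 2 * m) / (2 * m + 1)
  have hceil : ∀ d, r ≤ d ↔ k * n ≤ (2 * m + 1) * d := fun d => by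
    rw [Nat.div_le_iff_le_mul_add_pred (by omega)]
    omega
  have hrn : r ≤ n := (hceil n).mpr (by nlinarith)
  have hkr : k * n ≤ (2 * m + 1) * r := (hceil r).mp le_rfl
  refine IsLeast.csInf_eq ⟨⟨spreadSet n r, isKTupleDomSet_webGraph_spreadSet hn hrn hkr,
    ncard_spreadSet hrn⟩, ?_⟩
  rintro _ ⟨D, hD, rfl⟩
  simpa [hceil] using hD.mul_card_le (webGraph_ncard_closedNbhd hn)

theorem stmt_18 (n m k : ℕ) (hm : 0 < m) (hn : 2 * m + 1 ≤ n)
    (hk : 0 < k) (hk2 : k ≤ 2 * m + 1) :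
    ktupleDomNum (webGraph n m) k = (k * n + 2 * m) / (2 * m + 1) :=
  stmt_18_general n m k hn hk2
end
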